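/- Let E(n) be as follows: E(1) = 1, and for n ≥ 2, E(n) is the number of triples on the (1,0)-Euclid tree with maximum coordinate n. Then for every positive integer n, E(n) = Σ_{d | n} μ(d)·(⌊n/(2d)⌋ + 1), where μ is the Möbius function. -/

import Mathlib

/-- The maximum coordinate of a triple. -/
def tmax (T : ℕ × ℕ × ℕ) : ℕ := max T.1 (max T.2.1 T.2.2)

/-- First branching operation Γ_{β,1}(τ₁,τ₂,τ₃) = (τ₂, τ₃, τ₂+τ₃+β). -/
def Gamma1 (β : ℕ) (T : ℕ × ℕ × ℕ) : ℕ × ℕ × ℕ := (T.2.1, T.2.2, T.2.1 + T.2.2 + β)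

/-- Second branching operation Γ_{β,2}(τ₁,τ₂,τ₃) = (τ₁, τ₃, τ₁+τ₃+β). -/
def Gamma2 (β : ℕ) (T : ℕ × ℕ × ℕ) : ℕ × ℕ × ℕ := (T.1, T.2.2, T.1 + T.2.2 + β)

/-- The j-th layer of the (α,β)-Euclid tree. -/
def layer (α β : ℕ) : ℕ → Set (ℕ × ℕ × ℕ)
  | 0 => {(α, α, 2 * α + β)}
  | j + 1 => {T | ∃ P ∈ layer α β j, T = Gamma1 β P ∨ T = Gamma2 β P}

/-- The (α,β)-Euclid tree: all triples on some layer. -/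
def EuclidTree (α β : ℕ) : Set (ℕ × ℕ × ℕ) := ⋃ j, layer α β j

/-- E(1) = 1 and, for n ≥ 2, E(n) is the number of triples on the (1,0)-Euclid tree
with maximum coordinate n. -/
noncomputable def E (n : ℕ) : ℕ :=
  if n = 1 then 1 else {T ∈ EuclidTree 1 0 | tmax T = n}.ncard

/-!
Running the Euclidean algorithm backwards shows that the (1,0)-Euclid tree consists exactly of
the triples `(a, b, a + b)` with `0 < a ≤ b` and `gcd a b = 1`: the parent of such a triple is
obtained by subtracting the smaller entry from the larger. Hence for `n ≠ 1` the triples with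
maximum `n` correspond to the `a ∈ (0, n/2]` coprime to `n`, and Möbius inversion counts these
as `∑_{d ∣ n} μ(d) ⌊n/(2d)⌋`. The `+ 1` in the formula contributes `∑_{d ∣ n} μ(d) = [n = 1]`,
which accounts for the convention `E(1) = 1`.
-/

open Finset

theorem exists_coprime_of_mem_layer {j : ℕ} {T : ℕ × ℕ × ℕ} (h : T ∈ layer 1 0 j) :
    ∃ a b : ℕ, 0 < a ∧ a ≤ b ∧ a.Coprime b ∧ T = (a, b, a + b) := by
  induction j generalizing T with
  | zero => exact ⟨1, 1, one_pos, le_rfl, Nat.coprime_one_left 1, h⟩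
  | succ j ih =>
    obtain ⟨P, hP, hT⟩ := h
    obtain ⟨a, b, ha, hab, hcop, rfl⟩ := ih hP
    rcases hT with rfl | rfl
    · exact ⟨b, a + b, by omega, by omega, Nat.coprime_add_self_right.2 hcop.symm,
        by simp [Gamma1]⟩
    · exact ⟨a, a + b, ha, by omega, Nat.coprime_self_add_right.2 hcop, by simp [Gamma2]⟩

theorem mem_euclidTree_of_parent {P T : ℕ × ℕ × ℕ} (hP : P ∈ EuclidTree 1 0)
    (h : T = Gamma1 0 P ∨ T = Gamma2 0 P) : T ∈ EuclidTree 1 0 := by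
  obtain ⟨j, hj⟩ := Set.mem_iUnion.1 hP
  exact Set.mem_iUnion.2 ⟨j + 1, P, hj, h⟩

theorem mk_mem_euclidTree {a b : ℕ} (ha : 0 < a) (hab : a ≤ b) (hcop : a.Coprime b) :
    (a, b, a + b) ∈ EuclidTree 1 0 := by
  induction b using Nat.strong_induction_on generalizing a with
  | _ b ih =>
    obtain rfl | hlt := hab.eq_or_lt
    · obtain rfl : a = 1 := (Nat.coprime_self a).1 hcop
      exact Set.mem_iUnion.2 ⟨0, rfl⟩
    have hcop' : a.Coprime (b - a) := (Nat.coprime_sub_self_right hlt.le).2 hcop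
    rcases le_total a (b - a) with hle | hle
    · refine mem_euclidTree_of_parent (ih (b - a) (by omega) ha hle hcop') (Or.inr ?_)
      simp only [Gamma2, Prod.mk.injEq, true_and]
      omega
    · refine mem_euclidTree_of_parent (ih a hlt (by omega) hle hcop'.symm) (Or.inl ?_)
      simp only [Gamma1, Prod.mk.injEq, true_and]
      omega

theorem mem_euclidTree_iff {T : ℕ × ℕ × ℕ} : T ∈ EuclidTree 1 0 ↔
    ∃ a b : ℕ, 0 < a ∧ a ≤ b ∧ a.Coprime b ∧ T = (a, b, a + b) := by
  refine ⟨fun h => ?_, ?_⟩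
  · obtain ⟨j, hj⟩ := Set.mem_iUnion.1 h
    exact exists_coprime_of_mem_layer hj
  · rintro ⟨a, b, ha, hab, hcop, rfl⟩
    exact mk_mem_euclidTree ha hab hcop

theorem tmax_mk (a b : ℕ) : tmax (a, b, a + b) = a + b := by
  simp only [tmax]
  omega

theorem euclidTree_tmax_eq (n : ℕ) :
    {T ∈ EuclidTree 1 0 | tmax T = n} =
      ({a ∈ Ioc 0 (n / 2) | a.Coprime n}.image fun a => (a, n - a, n) : Finset _) := by
  ext T
  simp only [Set.mem_ofPred_eq, coe_image, Set.mem_image, mem_coe, mem_filter, mem_Ioc,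
    mem_euclidTree_iff]
  constructor
  · rintro ⟨⟨a, b, ha, hab, hcop, rfl⟩, hT⟩
    rw [tmax_mk] at hT
    subst hT
    exact ⟨a, ⟨⟨ha, by omega⟩, Nat.coprime_self_add_right.2 hcop⟩, by simp⟩
  · rintro ⟨a, ⟨⟨ha, han⟩, hcop⟩, rfl⟩
    have hsum : a + (n - a) = n := by omega
    refine ⟨⟨a, n - a, ha, by omega, (Nat.coprime_sub_self_right (by omega)).2 hcop, ?_⟩, ?_⟩
    · rw [hsum]
    · simp only [tmax]
      omega

theorem E_eq_card_coprime {n : ℕ} (hn : n ≠ 1) :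
    E n = #{a ∈ Ioc 0 (n / 2) | a.Coprime n} := by
  rw [E, if_neg hn, euclidTree_tmax_eq, Set.ncard_coe_finset,
    card_image_of_injective _ fun x y h => congrArg Prod.fst h]

open ArithmeticFunction ArithmeticFunction.Moebius in
theorem sum_divisors_moebius (n : ℕ) : ∑ d ∈ n.divisors, μ d = if n = 1 then 1 else 0 := by
  rw [← coe_mul_zeta_apply, moebius_mul_coe_zeta, one_apply]

open ArithmeticFunction ArithmeticFunction.Moebius in
theorem card_filter_coprime_Ioc (m : ℕ) {n : ℕ} (hn : n ≠ 0) :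
    (#{a ∈ Ioc 0 m | a.Coprime n} : ℤ) = ∑ d ∈ n.divisors, μ d * (m / d : ℕ) := by
  have hcoprime (a : ℕ) :
      (if a.Coprime n then 1 else 0 : ℤ) = ∑ d ∈ n.divisors with d ∣ a, μ d := by
    simp_rw [Nat.coprime_iff_gcd_eq_one, ← sum_divisors_moebius]
    congr 1
    ext d
    simp only [mem_filter, Nat.mem_divisors, Nat.dvd_gcd_iff, ne_eq, Nat.gcd_eq_zero_iff, hn,
      not_false_eq_true, and_false, and_true]
    tauto
  calc (#{a ∈ Ioc 0 m | a.Coprime n} : ℤ)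
      = ∑ a ∈ Ioc 0 m, ∑ d ∈ n.divisors with d ∣ a, μ d := by
        simp_rw [← hcoprime, ← sum_boole]
    _ = ∑ d ∈ n.divisors, μ d * #{a ∈ Ioc 0 m | d ∣ a} := by
        simp_rw [sum_filter, sum_comm (s := Ioc 0 m), ← sum_filter, sum_const, nsmul_eq_mul,
          mul_comm]
    _ = ∑ d ∈ n.divisors, μ d * (m / d : ℕ) := by
        simp_rw [Nat.Ioc_filter_dvd_card_eq_div]

open ArithmeticFunction ArithmeticFunction.Moebius in
theorem E_eq_moebius_sum_general (n : ℕ) :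
    (E n : ℤ) = ∑ d ∈ n.divisors, μ d * ((n / (2 * d) : ℕ) + 1) := by
  obtain rfl | hn1 := eq_or_ne n 1
  · simp [E]
  obtain rfl | hn0 := eq_or_ne n 0
  · simp [E_eq_card_coprime]
  rw [E_eq_card_coprime hn1, card_filter_coprime_Ioc _ hn0]
  simp_rw [Nat.div_div_eq_div_mul, mul_add_one, sum_add_distrib, sum_divisors_moebius,
    if_neg hn1, add_zero]

open ArithmeticFunction ArithmeticFunction.Moebius in
/-- E(n) = Σ_{d ∣ n} μ(d)·(⌊n/(2d)⌋ + 1) for every positive integer n. -/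
theorem E_eq_moebius_sum (n : ℕ) (hn : 1 ≤ n) :
    (E n : ℤ) = ∑ d ∈ n.divisors, μ d * ((n / (2 * d) : ℕ) + 1) :=
  E_eq_moebius_sum_general n
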